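/- arXiv:1604.02688 — 3 statements merged into one kernel-verified Lean document; each statement's English description precedes it below -/
import Mathlib

section
/- Let F_1, …, F_m ∈ ℝ_{≥0}^{3n} be nonzero vectors and let d(S) = -χ(S) + δ(S) with χ linear and δ(S) = Σ_j (a_j b_j + b_j c_j + c_j a_j). Suppose for each i either (δ(F_i) = 0 and -χ(F_i) ≥ 1) or δ(F_i) ≥ 1. Then for every D ∈ ℝ there are only finitely many tuples (x_1,…,x_m) of non-negative integers with d(Σ_i x_i F_i) ≤ D. -/
open Finset

/-- The double arc function `δ(S) = Σ_j (a_j b_j + b_j c_j + c_j a_j)` on `ℝ^{3n}`. -/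
noncomputable def doubleArc (n : ℕ) (S : Fin n → Fin 3 → ℝ) : ℝ :=
  ∑ j : Fin n, (S j 0 * S j 1 + S j 1 * S j 2 + S j 2 * S j 0)

lemma sum_mul_le {m : ℕ} (a b : Fin m → ℝ) (ha : ∀ i, 0 ≤ a i) (hb : ∀ i, 0 ≤ b i) :
    ∑ i, a i * b i ≤ (∑ i, a i) * (∑ i, b i) := by
  rw [Finset.sum_mul]
  apply Finset.sum_le_sum
  intro i _
  exact mul_le_mul_of_nonneg_left
    (Finset.single_le_sum (fun j _ => hb j) (Finset.mem_univ i)) (ha i)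

lemma doubleArc_sum_ge {n m : ℕ} (f : Fin m → Fin n → Fin 3 → ℝ)
    (hf : ∀ i j l, 0 ≤ f i j l) :
    ∑ i, doubleArc n (f i) ≤ doubleArc n (∑ i, f i) := by
  unfold doubleArc
  rw [Finset.sum_comm]
  apply Finset.sum_le_sum
  intro j _
  have hS : ∀ l, (∑ i, f i) j l = ∑ i, f i j l := by
    intro l; simp
  rw [hS 0, hS 1, hS 2]
  rw [Finset.sum_add_distrib, Finset.sum_add_distrib]
  gcongr ?_ + ?_ + ?_ <;>
    exact sum_mul_le _ _ (fun i => hf i j _) (fun i => hf i j _)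

/-- If `F_1, …, F_m` are nonzero non-negative vectors such that for each `i` either
`δ(F_i) = 0` and `-χ(F_i) ≥ 1`, or `δ(F_i) ≥ 1`, then for each `D ∈ ℝ` only finitely
many tuples of non-negative integers `(x_1,…,x_m)` satisfy `d(Σ_i x_i F_i) ≤ D`,
where `d = -χ + δ`. -/
theorem stmt_4 (n m : ℕ) (χ : (Fin n → Fin 3 → ℝ) →ₗ[ℝ] ℝ)
    (d : (Fin n → Fin 3 → ℝ) → ℝ) (hd : ∀ S, d S = -χ S + doubleArc n S)
    (F : Fin m → Fin n → Fin 3 → ℝ)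
    (hFnn : ∀ i j l, 0 ≤ F i j l) (hF0 : ∀ i, F i ≠ 0)
    (hdich : ∀ i, (doubleArc n (F i) = 0 ∧ 1 ≤ -χ (F i)) ∨ 1 ≤ doubleArc n (F i))
    (D : ℝ) :
    {x : Fin m → ℕ | d (∑ i : Fin m, x i • F i) ≤ D}.Finite := by
  -- choose per-index lower-bound constants
  have hB : ∀ i : Fin m, ∃ B : ℝ, ∀ x : ℕ,
      (x : ℝ) - B ≤ -((x : ℝ) * χ (F i)) + (x : ℝ)^2 * doubleArc n (F i) := by
    intro i
    rcases hdich i with ⟨hδ, hχ⟩ | hδ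
    · exact ⟨0, fun x => by
        rw [hδ]
        have : (x : ℝ) * 1 ≤ (x : ℝ) * (-χ (F i)) :=
          mul_le_mul_of_nonneg_left hχ (by positivity)
        nlinarith⟩
    · refine ⟨(χ (F i) + 1)^2 / 4, fun x => ?_⟩
      have h1 : (x : ℝ)^2 * 1 ≤ (x : ℝ)^2 * doubleArc n (F i) :=
        mul_le_mul_of_nonneg_left hδ (by positivity)
      nlinarith [sq_nonneg ((x : ℝ) - (χ (F i) + 1) / 2)]
  choose B hB using hB
  set N : ℕ := ⌈D + ∑ i, B i⌉₊ with hN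
  apply Set.Finite.subset (Set.finite_Icc (0 : Fin m → ℕ) (fun _ => N))
  intro x hx
  simp only [Set.mem_setOf_eq] at hx
  have key : (∑ i, (x i : ℝ)) - (∑ i, B i) ≤ D := by
    have hχS : χ (∑ i : Fin m, x i • F i) = ∑ i, (x i : ℝ) * χ (F i) := by
      rw [map_sum]
      congr 1; funext i
      rw [← Nat.cast_smul_eq_nsmul ℝ, map_smul, smul_eq_mul]
    have hδS : ∑ i, (x i : ℝ)^2 * doubleArc n (F i)
        ≤ doubleArc n (∑ i : Fin m, x i • F i) := by
      have := doubleArc_sum_ge (fun i => x i • F i)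
        (fun i j l => by
          simp only [Pi.smul_apply]
          exact smul_nonneg (Nat.zero_le _) (hFnn i j l))
      refine le_trans (le_of_eq ?_) this
      apply Finset.sum_congr rfl
      intro i _
      unfold doubleArc
      rw [Finset.mul_sum]
      apply Finset.sum_congr rfl
      intro j _
      simp only [Pi.smul_apply, smul_eq_mul, nsmul_eq_mul]
      ring
    have hlow : ∑ i, ((x i : ℝ) - B i) ≤ d (∑ i : Fin m, x i • F i) := by
      rw [hd, hχS]
      calc ∑ i, ((x i : ℝ) - B i)
          ≤ ∑ i, (-((x i : ℝ) * χ (F i)) + (x i : ℝ)^2 * doubleArc n (F i)) :=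
            Finset.sum_le_sum (fun i _ => hB i (x i))
        _ = -(∑ i, (x i : ℝ) * χ (F i)) + ∑ i, (x i : ℝ)^2 * doubleArc n (F i) := by
            rw [Finset.sum_add_distrib, Finset.sum_neg_distrib]
        _ ≤ _ := by linarith [hδS]
    rw [Finset.sum_sub_distrib] at hlow
    linarith
  rw [Set.mem_Icc]
  constructor
  · exact fun i => Nat.zero_le _
  · intro i
    have h1 : (x i : ℝ) ≤ ∑ j, (x j : ℝ) :=
      Finset.single_le_sum (f := fun j => (x j : ℝ)) (fun j _ => by positivity) (Finset.mem_univ i)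
    have h2 : (x i : ℝ) ≤ D + ∑ j, B j := by linarith
    have h3 : (x i : ℝ) ≤ (N : ℝ) := h2.trans (Nat.le_ceil _)
    exact_mod_cast h3
end

section
/- For integers a,b,c with m = min(a,b,c), the formal Laurent series J_Δ(a,b,c) has lowest q-degree equal to ((a-m)(b-m) + (b-m)(c-m) + (c-m)(a-m) - m)/2 and the coefficient of the lowest degree term is (-1)^m. -/
open Finset

/-- The formal variable `T = q^{1/2}`: formal Laurent series in `q^{1/2}` are Laurent
series in `T`, with `q = T^2`. -/
noncomputable def Thalf : LaurentSeries ℚ := HahnSeries.single 1 1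

/-- The q-Pochhammer symbol `(q)_n = Π_{i=1}^n (1 - q^i)`, with `q = T^2`. -/
noncomputable def qPoch (n : ℕ) : LaurentSeries ℚ :=
  ∏ i ∈ Finset.range n, (1 - Thalf ^ (2 * (i + 1) : ℤ))

/-- The tetrahedron index
`I_Δ(m,e) = Σ_{n = max(0,-e)}^∞ (-1)^n q^{n(n+1)/2 - (n+e/2)m} / ((q)_n (q)_{n+e})`
as a formal Laurent series in `q^{1/2} = T`. -/
noncomputable def Itet (m e : ℤ) : LaurentSeries ℚ :=
  ∑' k : ℕ,
    (fun n : ℕ =>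
      (-1 : LaurentSeries ℚ) ^ n *
        Thalf ^ ((n : ℤ) * (n + 1) - (2 * n + e) * m) /
        (qPoch n * qPoch ((n : ℤ) + e).toNat))
    (k + (max 0 (-e)).toNat)

/-- `J_Δ(a,b,c) = (-q^{1/2})^{-b} I_Δ(b-c, a-b)`. -/
noncomputable def Jtet (a b c : ℤ) : LaurentSeries ℚ :=
  (-Thalf) ^ (-b) * Itet (b - c) (a - b)

/-! `I_Δ(m,e)` is a sum over `n ≥ max(0,-e)` of terms whose lowest exponent in `T = q^{1/2}` is
`n(n+1) - (2n+e)m`. This is strictly increasing in `n` from `n = max(0,-e)` on as soon as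
`m ≤ max(0,-e)`, and then the first term alone gives the lowest term of the series; this covers
`J_Δ(a,b,c)` whenever `min(a,b) ≤ c`. When `c` is the strict minimum the two smallest exponents tie
and their terms cancel, so instead one uses the triality `I_Δ(m,e) = (-T)^{-e} I_Δ(e,-e-m)` for
`m ≥ 0`, proved by induction on `m` from the `q`-difference equation
`I_Δ(m,e) = T^{-e} I_Δ(m-1,e) - T^{1-m-e} I_Δ(m-1,e+1)`. It gives the cyclic symmetry
`J_Δ(a,b,c) = J_Δ(c,a,b)`, which moves the minimum out of the last slot. -/

open scoped LaurentSeries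
open Filter Topology HahnSeries

namespace HahnSeries

variable {Γ R : Type*}

def HasLowestTerm [PartialOrder Γ] [Zero R] (f : HahnSeries Γ R) (D : Γ) (r : R) : Prop :=
  (∀ d < D, f.coeff d = 0) ∧ f.coeff D = r

theorem hasLowestTerm_single [PartialOrder Γ] [Zero R] (a : Γ) (r : R) :
    HasLowestTerm (single a r) a r :=
  ⟨fun _ hd => coeff_single_of_ne hd.ne, coeff_single_same a r⟩

theorem HasLowestTerm.ne_zero [PartialOrder Γ] [Zero R] {f : HahnSeries Γ R} {D : Γ} {r : R}
    (h : HasLowestTerm f D r) (hr : r ≠ 0) : f ≠ 0 :=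
  ne_zero_of_coeff_ne_zero (h.2 ▸ hr)

section LinearOrder

variable [Zero Γ] [LinearOrder Γ] [Zero R]

theorem hasLowestTerm_order_leadingCoeff (f : HahnSeries Γ R) :
    HasLowestTerm f f.order f.leadingCoeff :=
  ⟨fun _ hd => coeff_eq_zero_of_lt_order hd, leadingCoeff_eq.symm⟩

theorem HasLowestTerm.order_eq {f : HahnSeries Γ R} {D : Γ} {r : R}
    (h : HasLowestTerm f D r) (hr : r ≠ 0) : f.order = D := by
  have hD : f.coeff D ≠ 0 := h.2 ▸ hr
  refine le_antisymm (order_le_of_coeff_ne_zero hD) (not_lt.1 fun hlt => ?_)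
  exact coeff_order_eq_zero.not.2 (ne_zero_of_coeff_ne_zero hD) (h.1 _ hlt)

theorem HasLowestTerm.leadingCoeff_eq {f : HahnSeries Γ R} {D : Γ} {r : R}
    (h : HasLowestTerm f D r) (hr : r ≠ 0) : f.leadingCoeff = r := by
  rw [HahnSeries.leadingCoeff_eq, h.order_eq hr, h.2]

end LinearOrder

theorem HasLowestTerm.mul [AddCommMonoid Γ] [LinearOrder Γ] [IsOrderedCancelAddMonoid Γ]
    [NonUnitalNonAssocSemiring R] {f g : HahnSeries Γ R} {D E : Γ} {r s : R}
    (hf : HasLowestTerm f D r) (hg : HasLowestTerm g E s) :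
    HasLowestTerm (f * g) (D + E) (r * s) := by
  have hzero : ∀ i j, i + j ≤ D + E → (i, j) ≠ (D, E) → f.coeff i * g.coeff j = 0 := by
    intro i j hij hne
    rcases lt_or_ge i D with hi | hi
    · rw [hf.1 i hi, zero_mul]
    rcases lt_or_ge j E with hj | hj
    · rw [hg.1 j hj, mul_zero]
    rcases hi.lt_or_eq with hi | rfl
    · exact absurd hij (not_le.2 (add_lt_add_of_lt_of_le hi hj))
    rcases hj.lt_or_eq with hj | rfl
    · exact absurd hij (not_le.2 (add_lt_add_of_le_of_lt le_rfl hj))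
    exact absurd rfl hne
  refine ⟨fun d hd => ?_, ?_⟩
  · rw [coeff_mul]
    refine Finset.sum_eq_zero fun ⟨i, j⟩ hij => ?_
    have hsum : i + j = d := (Finset.mem_antidiagonal.1 hij).2.2
    subst hsum
    exact hzero i j hd.le fun h => hd.ne (by simp_all)
  · rw [coeff_mul, Finset.sum_eq_single (D, E), hf.2, hg.2]
    · exact fun ij hij hne => hzero _ _ (Finset.mem_antidiagonal.1 hij).2.2.le hne
    · intro hDE
      by_cases hD : f.coeff D = 0
      · rw [hD, zero_mul]
      · simp_all [Finset.mem_antidiagonal]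

theorem HasLowestTerm.inv [AddCommGroup Γ] [LinearOrder Γ] [IsOrderedAddMonoid Γ] [Field R]
    {f : HahnSeries Γ R} {D : Γ} {r : R} (h : HasLowestTerm f D r) (hr : r ≠ 0) :
    HasLowestTerm f⁻¹ (-D) r⁻¹ := by
  have hf : f ≠ 0 := h.ne_zero hr
  have hlead : r * f⁻¹.leadingCoeff ≠ 0 :=
    mul_ne_zero hr (leadingCoeff_ne_zero.2 (inv_ne_zero hf))
  have hone := h.mul (hasLowestTerm_order_leadingCoeff f⁻¹)
  rw [mul_inv_cancel₀ hf] at hone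
  have horder : f⁻¹.order = -D := by
    have := hone.order_eq hlead
    rw [order_one] at this
    exact eq_neg_of_add_eq_zero_right this.symm
  have hcoeff : f⁻¹.leadingCoeff = r⁻¹ := by
    have := hone.leadingCoeff_eq hlead
    rw [leadingCoeff_one] at this
    exact eq_inv_of_mul_eq_one_right this.symm
  rw [← horder, ← hcoeff]
  exact hasLowestTerm_order_leadingCoeff f⁻¹

theorem single_zpow [AddCommGroup Γ] [LinearOrder Γ] [IsOrderedAddMonoid Γ] [Field R]
    (a : Γ) (r : R) (z : ℤ) : single a r ^ z = single (z • a) (r ^ z) := by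
  cases z with
  | ofNat n => simp [single_pow]
  | negSucc n => simp [zpow_negSucc, single_pow, negSucc_zsmul]

end HahnSeries

namespace LaurentSeries

variable {K : Type*} [Field K]

-- `Valued.mk'` defines the topology as the one of `v.subgroups_basis`.
instance : NonarchimedeanRing K⸨X⸩ :=
  (Valued.v (R := K⸨X⸩)).subgroups_basis.nonarchimedean

theorem exists_coeff_eq_zero_subset_of_mem_nhds_zero {U : Set K⸨X⸩} (hU : U ∈ 𝓝 0) :
    ∃ D : ℤ, {f : K⸨X⸩ | ∀ d < D, f.coeff d = 0} ⊆ U := by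
  obtain ⟨γ, -, hγ⟩ := (Valued.v (R := K⸨X⸩)).subgroups_basis.hasBasis_nhds_zero.mem_iff.1 hU
  have hlt (c : (WithZero (Multiplicative ℤ))ˣ) :
      ∃ D : ℤ, ∀ f : K⸨X⸩, (∀ d < D, f.coeff d = 0) → Valued.v f < c :=
    ⟨1 - WithZero.log (c : WithZero (Multiplicative ℤ)), fun f hf =>
      ((valuation_le_iff_coeff_lt_eq_zero K).2 hf).trans_lt <| by
        rw [← WithZero.lt_log_iff_exp_lt c.ne_zero]
        omega⟩
  obtain ⟨D, hD⟩ := hlt (Units.map _ γ)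
  exact ⟨D, fun f hf => hγ (hD f hf)⟩

theorem summable_of_coeff_eq_zero_of_lt {ι : Type*} {f : ι → K⸨X⸩} (b : ι → ℤ)
    (hb : Tendsto b cofinite atTop) (hf : ∀ i, ∀ d < b i, (f i).coeff d = 0) : Summable f := by
  refine NonarchimedeanAddGroup.summable_of_tendsto_cofinite_zero fun U hU => ?_
  obtain ⟨D, hD⟩ := exists_coeff_eq_zero_subset_of_mem_nhds_zero hU
  exact (hb.eventually_ge_atTop D).mono fun i hi => hD fun d hd => hf i d (hd.trans_le hi)

theorem coeff_tsum_of_ne {ι : Type*} {f : ι → K⸨X⸩} (hf : Summable f) (d : ℤ) (i₀ : ι)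
    (h : ∀ i ≠ i₀, (f i).coeff d = 0) : (∑' i, f i).coeff d = (f i₀).coeff d := by
  -- `coeff d` is continuous even for the discrete topology on `K`.
  let _ : UniformSpace K := ⊥
  have : DiscreteTopology K := ⟨rfl⟩
  have hcont : Continuous fun g : K⸨X⸩ => g.coeff d := (uniformContinuous_coeff d).continuous
  exact (hf.hasSum.map (HahnSeries.coeff.addMonoidHom d) hcont).unique (hasSum_single i₀ h)

theorem hasLowestTerm_tsum {ι : Type*} {f : ι → K⸨X⸩} (hf : Summable f) {i₀ : ι} {D : ℤ} {r : K}
    (h₀ : (f i₀).HasLowestTerm D r) (h : ∀ i ≠ i₀, ∀ d ≤ D, (f i).coeff d = 0) :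
    (∑' i, f i).HasLowestTerm D r :=
  ⟨fun d hd => by rw [coeff_tsum_of_ne hf d i₀ fun i hi => h i hi d hd.le, h₀.1 d hd],
    by rw [coeff_tsum_of_ne hf D i₀ fun i hi => h i hi D le_rfl, h₀.2]⟩

end LaurentSeries

theorem Thalf_zpow (z : ℤ) : Thalf ^ z = single z 1 := by
  simp [Thalf, single_zpow]

theorem neg_Thalf_zpow (z : ℤ) : (-Thalf) ^ z = single z ((-1) ^ z) := by
  simp [Thalf, ← single_neg, single_zpow]

theorem Thalf_ne_zero : Thalf ≠ 0 := by
  simp [Thalf]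

theorem hasLowestTerm_one_sub_Thalf_zpow {k : ℤ} (hk : 0 < k) :
    HasLowestTerm (1 - Thalf ^ k) 0 1 := by
  rw [Thalf_zpow, ← single_zero_one]
  refine ⟨fun d hd => ?_, ?_⟩
  · simp [(hd.trans hk).ne, hd.ne]
  · simp [hk.ne]

theorem hasLowestTerm_qPoch (n : ℕ) : HasLowestTerm (qPoch n) 0 1 := by
  induction n with
  | zero => simpa [qPoch] using hasLowestTerm_single (0 : ℤ) (1 : ℚ)
  | succ n ih =>
    rw [qPoch, Finset.prod_range_succ, ← qPoch]
    simpa using ih.mul (hasLowestTerm_one_sub_Thalf_zpow (by positivity))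

def tetExp (m e : ℤ) (n : ℕ) : ℤ := n * (n + 1) - (2 * n + e) * m

noncomputable def tetTerm (m e : ℤ) (n : ℕ) : ℚ⸨X⸩ :=
  (-1) ^ n * Thalf ^ tetExp m e n / (qPoch n * qPoch ((n : ℤ) + e).toNat)

def tetStart (e : ℤ) : ℕ := (max 0 (-e)).toNat

theorem Itet_eq_tsum (m e : ℤ) : Itet m e = ∑' k, tetTerm m e (k + tetStart e) := rfl

theorem tetStart_cast (e : ℤ) : (tetStart e : ℤ) = max 0 (-e) :=
  Int.toNat_of_nonneg (le_max_left _ _)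

theorem tetTerm_eq (m e : ℤ) (n : ℕ) :
    tetTerm m e n =
      single (tetExp m e n) ((-1) ^ n) * (qPoch n * qPoch ((n : ℤ) + e).toNat)⁻¹ := by
  rw [tetTerm, div_eq_mul_inv, Thalf_zpow, ← single_zero_one, ← single_neg, single_pow,
    single_mul_single]
  simp

theorem hasLowestTerm_tetTerm (m e : ℤ) (n : ℕ) :
    HasLowestTerm (tetTerm m e n) (tetExp m e n) ((-1) ^ n) := by
  have hden := ((hasLowestTerm_qPoch n).mul (hasLowestTerm_qPoch ((n : ℤ) + e).toNat)).inv
    (mul_ne_zero one_ne_zero one_ne_zero)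
  rw [tetTerm_eq]
  simpa using (hasLowestTerm_single _ _).mul hden

theorem tendsto_tetExp (m e : ℤ) : Tendsto (tetExp m e) atTop atTop := by
  refine tendsto_atTop_mono (fun n => ?_) (tendsto_atTop_add_const_right _ (-m ^ 2 - e * m)
    tendsto_natCast_atTop_atTop)
  simp only [tetExp]
  nlinarith [sq_nonneg ((n : ℤ) - m)]

theorem summable_tetTerm (m e : ℤ) (c : ℕ) : Summable fun k => tetTerm m e (k + c) := by
  refine LaurentSeries.summable_of_coeff_eq_zero_of_lt (fun k => tetExp m e (k + c)) ?_
    fun k => (hasLowestTerm_tetTerm m e (k + c)).1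
  rw [Nat.cofinite_eq_atTop]
  exact (tendsto_tetExp m e).comp (tendsto_add_atTop_nat c)

theorem tetTerm_mul_Thalf_zpow (m e : ℤ) (n : ℕ) :
    tetTerm m e n * Thalf ^ (2 * (n : ℤ)) = Thalf ^ (-e) * tetTerm (m - 1) e n := by
  have hexp : tetExp m e n + 2 * n = -e + tetExp (m - 1) e n := by
    simp only [tetExp]
    ring
  rw [tetTerm_eq, tetTerm_eq, Thalf_zpow, Thalf_zpow, mul_right_comm, single_mul_single,
    ← mul_assoc, single_mul_single, hexp, one_mul, mul_one]

theorem tetTerm_succ_mul (m e : ℤ) (n : ℕ) :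
    tetTerm m e (n + 1) * (1 - Thalf ^ (2 * ((n : ℤ) + 1))) =
      -(Thalf ^ (1 - m - e) * tetTerm (m - 1) (e + 1) n) := by
  set F : ℚ⸨X⸩ := 1 - Thalf ^ (2 * ((n : ℤ) + 1))
  have hF : F ≠ 0 := (hasLowestTerm_one_sub_Thalf_zpow (by positivity)).ne_zero one_ne_zero
  have hq : qPoch (n + 1) = qPoch n * F := by
    rw [qPoch, Finset.prod_range_succ, ← qPoch]
  have hsingle : single (tetExp m e (n + 1)) ((-1 : ℚ) ^ (n + 1)) =
      -(Thalf ^ (1 - m - e) * single (tetExp (m - 1) (e + 1) n) ((-1) ^ n)) := by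
    rw [Thalf_zpow, single_mul_single, ← single_neg]
    congr 2
    · simp only [tetExp]
      push_cast
      ring
    · ring
  rw [tetTerm_eq, tetTerm_eq, hq, hsingle,
    show ((n + 1 : ℕ) + e : ℤ).toNat = ((n : ℤ) + (e + 1)).toNat by push_cast; ring_nf]
  field_simp

theorem Itet_eq_sub (m e : ℤ) :
    Itet m e = Thalf ^ (-e) * Itet (m - 1) e - Thalf ^ (1 - m - e) * Itet (m - 1) (e + 1) := by
  set N := tetStart e
  set N' := tetStart (e + 1)
  set g : ℕ → ℚ⸨X⸩ := fun n => tetTerm m e n * (1 - Thalf ^ (2 * (n : ℤ)))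
  have hsplit (n : ℕ) : tetTerm m e n = Thalf ^ (-e) * tetTerm (m - 1) e n + g n := by
    rw [← tetTerm_mul_Thalf_zpow]
    ring
  have hsum : Summable fun k => Thalf ^ (-e) * tetTerm (m - 1) e (k + N) :=
    (summable_tetTerm (m - 1) e N).mul_left _
  have hg : Summable fun k => g (k + N) := by
    simpa only [hsplit, add_sub_cancel_left] using (summable_tetTerm m e N).sub hsum
  -- For `e < 0` the two start indices differ by one; for `e ≥ 0` both are `0`, and `g 0 = 0`.
  have hshift : ∑' k, g (k + N) = ∑' k, g (k + N' + 1) := by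
    rcases lt_or_ge e 0 with he | he
    · have hN : N = N' + 1 := by
        simp only [N, N', tetStart]
        omega
      simp only [hN, add_assoc]
    · have hN : N = 0 := by simp [N, tetStart, he]
      have hN' : N' = 0 := by simp only [N', tetStart]; omega
      simp only [hN, hN', add_zero] at hg ⊢
      rw [hg.tsum_eq_zero_add]
      simp [g]
  have hg_succ (k : ℕ) :
      g (k + N' + 1) = -(Thalf ^ (1 - m - e) * tetTerm (m - 1) (e + 1) (k + N')) := by
    simp only [g]
    push_cast
    exact tetTerm_succ_mul m e (k + N')
  rw [Itet_eq_tsum, tsum_congr fun k => hsplit (k + N), hsum.tsum_add hg, hshift,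
    tsum_congr hg_succ, tsum_neg, tsum_mul_left, tsum_mul_left, ← Itet_eq_tsum, ← Itet_eq_tsum,
    ← sub_eq_add_neg]

theorem tetTerm_neg_self (e : ℤ) (n n' : ℕ) (h : (n : ℤ) = n' + e) :
    tetTerm e (-e) n = (-Thalf) ^ e * tetTerm 0 e n' := by
  have hexp : tetExp e (-e) n = e + tetExp 0 e n' := by
    simp only [tetExp, h]
    ring
  have hsign : (-1 : ℚ) ^ n = (-1) ^ e * (-1) ^ n' := by
    rw [← zpow_natCast, h, zpow_add₀ (by norm_num), zpow_natCast, mul_comm]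
  rw [tetTerm_eq, tetTerm_eq, neg_Thalf_zpow, ← mul_assoc, single_mul_single, hexp, hsign,
    show ((n : ℤ) + -e).toNat = n' by omega, show ((n' : ℤ) + e).toNat = n by omega,
    mul_comm (qPoch n')]

theorem Itet_neg_self (e : ℤ) : Itet e (-e) = (-Thalf) ^ e * Itet 0 e := by
  rw [Itet_eq_tsum, Itet_eq_tsum, ← tsum_mul_left]
  exact tsum_congr fun k => tetTerm_neg_self e _ _ (by push_cast [tetStart_cast]; omega)

theorem Itet_triality {m : ℤ} (hm : 0 ≤ m) (e : ℤ) :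
    Itet m e = (-Thalf) ^ (-e) * Itet e (-e - m) := by
  have hT : (-Thalf) ≠ 0 := neg_ne_zero.2 Thalf_ne_zero
  induction m, hm using Int.leInduction generalizing e with
  | base =>
    rw [sub_zero, Itet_neg_self, ← mul_assoc, ← zpow_add₀ hT, neg_add_cancel, zpow_zero, one_mul]
  | succ m hm ih =>
    have h := Itet_eq_sub (e + 1) (-e - (m + 1))
    rw [Itet_eq_sub (m + 1) e, add_sub_cancel_right, ih e, ih (e + 1),
      show -(e + 1) - m = -e - (m + 1) by ring, h, add_sub_cancel_right,
      show -e - (m + 1) + 1 = -e - m by ring]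
    simp only [zpow_add₀ Thalf_ne_zero, zpow_sub₀ Thalf_ne_zero, zpow_add₀ hT, zpow_neg, zpow_one]
    have := Thalf_ne_zero
    field_simp
    ring

theorem tetExp_lt_tetExp_add {m e : ℤ} {N : ℕ} (h : m ≤ N) {k : ℕ} (hk : k ≠ 0) :
    tetExp m e N < tetExp m e (k + N) := by
  have hk : (1 : ℤ) ≤ k := by exact_mod_cast Nat.one_le_iff_ne_zero.2 hk
  simp only [tetExp]
  push_cast
  nlinarith

theorem hasLowestTerm_Itet {m e : ℤ} (h : m ≤ tetStart e) :
    HasLowestTerm (Itet m e) (tetExp m e (tetStart e)) ((-1) ^ tetStart e) := by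
  rw [Itet_eq_tsum]
  refine LaurentSeries.hasLowestTerm_tsum (summable_tetTerm m e _) (i₀ := 0)
    (by simpa using hasLowestTerm_tetTerm m e (tetStart e)) fun k hk d hd => ?_
  exact (hasLowestTerm_tetTerm m e _).1 d (hd.trans_lt (tetExp_lt_tetExp_add h hk))

theorem Jtet_rotate {a b c : ℤ} (h : c ≤ b) : Jtet a b c = Jtet c a b := by
  rw [Jtet, Jtet, Itet_triality (sub_nonneg.2 h), ← mul_assoc,
    ← zpow_add₀ (neg_ne_zero.2 Thalf_ne_zero)]
  congr 2 <;> ring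

theorem hasLowestTerm_Jtet {a b c m : ℤ} (hm : m = min a (min b c)) (h : min a b ≤ c) :
    HasLowestTerm (Jtet a b c)
      ((a - m) * (b - m) + (b - m) * (c - m) + (c - m) * (a - m) - m) ((-1) ^ m) := by
  have hN := tetStart_cast (a - b)
  have hI := (hasLowestTerm_single (-b) ((-1 : ℚ) ^ (-b))).mul
    (hasLowestTerm_Itet (m := b - c) (e := a - b) (by omega))
  rw [Jtet, neg_Thalf_zpow]
  convert hI using 1
  · simp only [tetExp]
    rcases le_total a b with hab | hba
    · rw [hN, show m = a by omega, show max 0 (-(a - b)) = b - a by omega]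
      ring
    · rw [hN, show m = b by omega, show max 0 (-(a - b)) = 0 by omega]
      ring
  · rw [← zpow_natCast, ← zpow_add₀ (by norm_num), hN, show -b + max 0 (-(a - b)) = -m by omega,
      ← inv_zpow', inv_neg_one]

/-- For integers `a, b, c` with `m = min(a,b,c)`, the lowest term of `J_Δ(a,b,c)` has
`q`-degree `((a-m)(b-m) + (b-m)(c-m) + (c-m)(a-m) - m)/2`, i.e. `T`-degree
`(a-m)(b-m) + (b-m)(c-m) + (c-m)(a-m) - m` where `T = q^{1/2}`, and its coefficient
is `(-1)^m`. -/
theorem stmt_8 (a b c : ℤ) :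
    let m := min a (min b c)
    let D := (a - m) * (b - m) + (b - m) * (c - m) + (c - m) * (a - m) - m
    (∀ d : ℤ, d < D → (Jtet a b c).coeff d = 0) ∧
    (Jtet a b c).coeff D = (-1 : ℚ) ^ m := by
  intro m D
  show HasLowestTerm (Jtet a b c) D ((-1) ^ m)
  rcases le_or_gt (min a b) c with h | h
  · exact hasLowestTerm_Jtet rfl h
  · rw [Jtet_rotate (by omega : c ≤ b)]
    convert hasLowestTerm_Jtet (a := c) (b := a) (c := b) (m := m) (by omega) (by omega) using 2
    ring
end

section
/- (Combinatorial Gauss–Bonnet for polygons) Suppose a compact surface S has a finite CW (cell) decomposition with v vertices, e edges, f faces, all faces polygons, with k boundary vertices and k boundary edges forming the boundary. Assign a real angle to each corner of each polygon such that the sum of the angles around each interior vertex equals 2π. For each n-gon P define χ_P = (sum of corner angles of P)/(2π) - n/2 + 1. Then v - e + f = Σ_P χ_P + (1/2π) Σ_{i=1}^k (π - θ_i), where θ_i is the sum of the interior angles at the i-th boundary vertex. -/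
open Finset

/-- (Combinatorial Gauss–Bonnet) Consider a finite cell decomposition of a compact
surface with `vint` interior vertices, `k` boundary vertices, `eint` interior edges,
`k` boundary edges, and `f` polygonal faces, the `P`-th face being an `nP P`-gon with
corner angle sum `A P`.  A formal angle structure requires the angle sum around every
interior vertex to be `2π`; `θ i` denotes the sum of interior angles at the `i`-th
boundary vertex.  The combinatorial facts from the cell decomposition are that the
total number of polygon sides is `2·eint + k` (each interior edge bounds two sides,
each boundary edge one) and the total of all corner angles is
`2π·vint + Σ_i θ_i`.  Then the Euler characteristic `v - e + f` with `v = vint + k`,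
`e = eint + k` satisfies
`v - e + f = Σ_P χ_P + (1/2π) Σ_{i=1}^k (π - θ_i)`,
where `χ_P = A P/(2π) - nP P/2 + 1`. -/
theorem stmt_11 (vint k eint f : ℕ) (nP : Fin f → ℕ) (A : Fin f → ℝ)
    (θ : Fin k → ℝ)
    (hsides : ∑ P : Fin f, nP P = 2 * eint + k)
    (hangles : ∑ P : Fin f, A P = 2 * Real.pi * vint + ∑ i : Fin k, θ i) :
    ((vint + k : ℝ)) - ((eint + k : ℝ)) + (f : ℝ) =
      (∑ P : Fin f, (A P / (2 * Real.pi) - (nP P : ℝ) / 2 + 1)) +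
        (1 / (2 * Real.pi)) * ∑ i : Fin k, (Real.pi - θ i) := by
  have hpi : (2 * Real.pi) ≠ 0 := by positivity
  have h1 : ∑ P : Fin f, (A P / (2 * Real.pi) - (nP P : ℝ) / 2 + 1)
      = (∑ P : Fin f, A P) / (2 * Real.pi) - (∑ P : Fin f, (nP P : ℝ)) / 2 + f := by
    rw [sum_add_distrib, sum_sub_distrib, sum_div, sum_div]
    simp
  have h2 : ∑ i : Fin k, (Real.pi - θ i) = k * Real.pi - ∑ i : Fin k, θ i := by
    rw [sum_sub_distrib]; simp [mul_comm]
  have h3 : (∑ P : Fin f, (nP P : ℝ)) = 2 * eint + k := by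
    exact_mod_cast congrArg (Nat.cast : ℕ → ℝ) hsides
  rw [h1, h2, h3, hangles]
  field_simp
  ring
end
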